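/- Let D be a W*-algebra and let M be a subalgebra of D containing the unit of D such that the star-subalgebra of D generated by M is weak*-dense in D (i.e., D is generated by M as a W*-algebra). Let B be a unital complex Banach algebra with ‖1‖ = 1 whose underlying Banach space is a dual Banach space. If φ₁, φ₂ : D → B are unital contractive algebra homomorphisms, each continuous from the weak* topology of D to the weak* topology of B, and φ₁(a) = φ₂(a) for all a ∈ M, then φ₁ = φ₂. -/

import Mathlib

/-!
Call `b` in a unital Banach algebra hermitian if `‖exp (i t b)‖ ≤ 1` for all real `t`. A
contractive homomorphism maps self-adjoint elements of a C*-algebra to hermitian ones, since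
`exp (i t h)` is unitary. Hermitian elements form a real subspace: as `‖1 + s b‖` and
`‖exp (s b)‖` agree to first order in `s`, they are the `b` with `‖1 ± i s b‖ ≤ 1 + o(s)` as
`s → 0⁺`, a condition stable under sums by convexity of the norm. If `b` and `i b` are both
hermitian, `z ↦ exp (z b)` is a bounded entire function, so `b = 0` by Liouville.

If `φ₁ x = φ₂ x`, write `x = h + i k` with `h`, `k` self-adjoint. Then `p = φ₁ h - φ₂ h` and
`q = φ₁ k - φ₂ k` are hermitian with `p + i q = 0`, so `i p = q` is hermitian too, whence
`p = q = 0` and `φ₁ x* = φ₂ x*`. Thus `φ₁` and `φ₂` agree on the star-subalgebra generated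
by `M`, and by weak*-continuity on all of `D`.
-/

open NormedSpace

/-- Weak*-continuity of a map between dual Banach spaces, each presented via an
isometric linear isomorphism onto the continuous dual of a given predual. -/
def WStarContinuous {X Xp Y Yp : Type*}
    [SeminormedAddCommGroup X] [NormedSpace ℂ X]
    [NormedAddCommGroup Xp] [NormedSpace ℂ Xp]
    [SeminormedAddCommGroup Y] [NormedSpace ℂ Y]
    [NormedAddCommGroup Yp] [NormedSpace ℂ Yp]
    (ιX : X ≃ₗᵢ[ℂ] StrongDual ℂ Xp) (ιY : Y ≃ₗᵢ[ℂ] StrongDual ℂ Yp) (f : X → Y) : Prop :=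
  Continuous fun φ : WeakDual ℂ Xp =>
    StrongDual.toWeakDual (ιY (f (ιX.symm (WeakDual.toStrongDual φ))))

open Filter Topology ComplexStarModule

section BanachAlgebra

variable {A : Type*} [NormedRing A] [NormedAlgebra ℂ A]

def IsDissipative (x : A) : Prop :=
  ∀ ε > 0, ∀ᶠ s : ℝ in 𝓝[>] 0, ‖1 + (s : ℂ) • x‖ ≤ 1 + ε * s

theorem IsDissipative.add {x y : A} (hx : IsDissipative x) (hy : IsDissipative y) :
    IsDissipative (x + y) := by
  intro ε hε
  filter_upwards [eventually_nhdsGT_zero_mul_left two_pos (hx (ε / 2) (by positivity)),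
    eventually_nhdsGT_zero_mul_left two_pos (hy (ε / 2) (by positivity))] with s hsx hsy
  have hmid : (1 : A) + (s : ℂ) • (x + y) =
      (2⁻¹ : ℂ) • ((1 + ((2 * s : ℝ) : ℂ) • x) + (1 + ((2 * s : ℝ) : ℂ) • y)) := by
    push_cast
    match_scalars <;> ring
  calc ‖1 + (s : ℂ) • (x + y)‖
      ≤ 2⁻¹ * (‖1 + ((2 * s : ℝ) : ℂ) • x‖ + ‖1 + ((2 * s : ℝ) : ℂ) • y‖) := by
        rw [hmid, norm_smul]
        norm_num
        exact norm_add_le _ _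
    _ ≤ 2⁻¹ * ((1 + ε / 2 * (2 * s)) + (1 + ε / 2 * (2 * s))) := by gcongr
    _ = 1 + ε * s := by ring

variable [CompleteSpace A]

theorem eventually_norm_exp_smul_sub_one_add_smul_le (x : A) {ε : ℝ} (hε : 0 < ε) :
    ∀ᶠ s : ℝ in 𝓝[>] 0, ‖exp ((s : ℂ) • x) - (1 + (s : ℂ) • x)‖ ≤ ε * s := by
  have hderiv : HasDerivAt (fun s : ℝ => exp ((s : ℂ) • x)) x 0 := by
    simpa [Complex.coe_smul] using hasDerivAt_exp_smul_const x (0 : ℝ)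
  filter_upwards [nhdsWithin_le_nhds ((hasDerivAt_iff_isLittleO_nhds_zero.1 hderiv).def hε),
    self_mem_nhdsWithin] with s hs (hs0 : 0 < s)
  simpa [Complex.coe_smul, sub_sub, abs_of_pos hs0] using hs

theorem isDissipative_iff_eventually_norm_exp_smul_le (x : A) :
    IsDissipative x ↔ ∀ ε > 0, ∀ᶠ s : ℝ in 𝓝[>] 0, ‖exp ((s : ℂ) • x)‖ ≤ 1 + ε * s := by
  constructor <;> intro h ε hε <;>
    filter_upwards [h (ε / 2) (by positivity),
      eventually_norm_exp_smul_sub_one_add_smul_le x (half_pos hε)] with s hs hexp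
  · linarith [norm_le_norm_add_norm_sub' (exp ((s : ℂ) • x)) (1 + (s : ℂ) • x)]
  · linarith [norm_le_norm_add_norm_sub (exp ((s : ℂ) • x)) (1 + (s : ℂ) • x)]


theorem norm_exp_smul_le_real_exp_mul {x : A} {ε t : ℝ} (ht : 0 < t)
    (h : ∀ᶠ s : ℝ in 𝓝[>] 0, ‖exp ((s : ℂ) • x)‖ ≤ 1 + ε * s) :
    ‖exp ((t : ℂ) • x)‖ ≤ Real.exp (ε * t) := by
  let +nondep : NormedAlgebra ℚ A := .restrictScalars ℚ ℂ A
  have hdiv : Tendsto (fun n : ℕ => t / n) atTop (𝓝[>] 0) :=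
    tendsto_nhdsWithin_iff.2 ⟨tendsto_const_div_atTop_nhds_zero_nat t,
      (eventually_gt_atTop 0).mono fun n hn => div_pos ht (Nat.cast_pos.2 hn)⟩
  obtain ⟨n, hn, hnε⟩ := ((eventually_gt_atTop 0).and (hdiv.eventually h)).exists
  have hpow : exp ((t : ℂ) • x) = exp (((t / n : ℝ) : ℂ) • x) ^ n := by
    rw [← exp_nsmul, ← Nat.cast_smul_eq_nsmul ℂ, smul_smul]
    have hn' : (n : ℂ) ≠ 0 := Nat.cast_ne_zero.2 hn.ne'
    congr 2
    push_cast
    field_simp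
  calc ‖exp ((t : ℂ) • x)‖ ≤ ‖exp (((t / n : ℝ) : ℂ) • x)‖ ^ n := hpow ▸ norm_pow_le' _ hn
    _ ≤ Real.exp (ε * (t / n)) ^ n := by
        gcongr
        exact hnε.trans (by linarith [Real.add_one_le_exp (ε * (t / n))])
    _ = Real.exp (ε * t) := by
        rw [← Real.exp_nat_mul]
        field_simp

theorem eq_zero_of_isBounded_range_exp_smul {x : A}
    (hx : Bornology.IsBounded (Set.range fun z : ℂ => exp (z • x))) : x = 0 := by
  have hdiff : Differentiable ℂ fun z : ℂ => exp (z • x) := fun z =>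
    (hasDerivAt_exp_smul_const x z).differentiableAt
  have hconst : (fun z : ℂ => exp (z • x)) = fun _ => 1 := funext fun z => by
    simpa using hdiff.apply_eq_apply_of_bounded hx z 0
  have hderiv : HasDerivAt (fun z : ℂ => exp (z • x)) x 0 := by
    simpa using hasDerivAt_exp_smul_const x (0 : ℂ)
  rw [hconst] at hderiv
  simpa using hderiv.unique (hasDerivAt_const (0 : ℂ) (1 : A))

def IsHermitianElement (x : A) : Prop :=
  ∀ t : ℝ, ‖exp ((t : ℂ) • Complex.I • x)‖ ≤ 1

theorem IsHermitianElement.eq_zero_of_I_smul {x : A} (hx : IsHermitianElement x)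
    (hIx : IsHermitianElement (Complex.I • x)) : x = 0 := by
  let +nondep : NormedAlgebra ℚ A := .restrictScalars ℚ ℂ A
  refine eq_zero_of_isBounded_range_exp_smul (isBounded_iff_forall_norm_le.2 ⟨1, ?_⟩)
  rintro _ ⟨z, rfl⟩
  show ‖exp (z • x)‖ ≤ 1
  have hz : z • x = ((-z.re : ℝ) : ℂ) • Complex.I • Complex.I • x + (z.im : ℂ) • Complex.I • x := by
    conv_lhs => rw [← Complex.re_add_im z]
    match_scalars
    ring_nf
    simp
  have hcomm : Commute (((-z.re : ℝ) : ℂ) • Complex.I • Complex.I • x)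
      ((z.im : ℂ) • Complex.I • x) := by
    simp only [smul_smul]
    exact ((Commute.refl x).smul_left _).smul_right _
  rw [hz, exp_add_of_commute hcomm]
  exact (norm_mul_le _ _).trans (mul_le_one₀ (hIx _) (norm_nonneg _) (hx _))

variable [NormOneClass A]

theorem isDissipative_iff_norm_exp_smul_le_one (x : A) :
    IsDissipative x ↔ ∀ t : ℝ, 0 ≤ t → ‖exp ((t : ℂ) • x)‖ ≤ 1 := by
  rw [isDissipative_iff_eventually_norm_exp_smul_le]
  refine ⟨fun h t ht => ?_, fun h ε hε => ?_⟩
  · rcases ht.eq_or_lt with rfl | ht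
    · simp
    have hlim : Tendsto (fun ε => Real.exp (ε * t)) (𝓝[>] 0) (𝓝 1) :=
      ((Real.continuous_exp.comp (continuous_mul_const t)).tendsto' 0 1 (by simp)).mono_left
        nhdsWithin_le_nhds
    exact ge_of_tendsto hlim (eventually_nhdsWithin_of_forall fun ε hε =>
      norm_exp_smul_le_real_exp_mul ht (h ε hε))
  · filter_upwards [self_mem_nhdsWithin] with s (hs : 0 < s)
    linarith [h s hs.le, mul_pos hε hs]

theorem isHermitianElement_iff_isDissipative (x : A) :
    IsHermitianElement x ↔ IsDissipative (Complex.I • x) ∧ IsDissipative (-(Complex.I • x)) := by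
  have hsmul_neg : ∀ t : ℝ, (t : ℂ) • -(Complex.I • x) = ((-t : ℝ) : ℂ) • Complex.I • x := by
    intro t
    rw [smul_neg, Complex.ofReal_neg, neg_smul]
  simp only [isDissipative_iff_norm_exp_smul_le_one, hsmul_neg]
  refine ⟨fun h => ⟨fun t _ => h t, fun t _ => h (-t)⟩, fun ⟨hpos, hneg⟩ t => ?_⟩
  rcases le_total 0 t with ht | ht
  · exact hpos t ht
  · simpa using hneg (-t) (neg_nonneg.2 ht)

theorem IsHermitianElement.sub {x y : A} (hx : IsHermitianElement x) (hy : IsHermitianElement y) :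
    IsHermitianElement (x - y) := by
  rw [isHermitianElement_iff_isDissipative] at *
  constructor
  · simpa [smul_sub, sub_eq_add_neg] using hx.1.add hy.2
  · simpa [smul_sub, sub_eq_add_neg, add_comm] using hx.2.add hy.1

end BanachAlgebra

section CStarAlgebra

variable {D B : Type*} [NormedRing D] [StarRing D] [CStarRing D] [CompleteSpace D]
  [NormedAlgebra ℂ D] [StarModule ℂ D] [NormedRing B] [NormedAlgebra ℂ B]

theorem isHermitianElement_map_of_isSelfAdjoint {φ : D →ₐ[ℂ] B} (hφ : ∀ d, ‖φ d‖ ≤ ‖d‖) {h : D}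
    (hh : IsSelfAdjoint h) : IsHermitianElement (φ h) := by
  intro t
  let +nondep : NormedAlgebra ℚ D := .restrictScalars ℚ ℂ D
  let +nondep : NormedAlgebra ℚ B := .restrictScalars ℚ ℂ B
  have hφc : Continuous φ := AddMonoidHomClass.continuous_of_bound φ 1 (by simpa using hφ)
  have hskew : (t : ℂ) • Complex.I • h ∈ skewAdjoint D := by
    rw [smul_smul]
    exact hh.smul_mem_skewAdjoint (by simp [skewAdjoint.mem_iff])
  have hunitary : ‖exp ((t : ℂ) • Complex.I • h)‖ ≤ 1 := by
    nontriviality D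
    exact (CStarRing.norm_of_mem_unitary (exp_mem_unitary_of_mem_skewAdjoint hskew)).le
  calc ‖exp ((t : ℂ) • Complex.I • φ h)‖ = ‖φ (exp ((t : ℂ) • Complex.I • h))‖ := by
        rw [map_exp φ hφc, map_smul, map_smul]
    _ ≤ 1 := (hφ _).trans hunitary

theorem map_star_eq_of_map_eq [CompleteSpace B] [NormOneClass B] {φ₁ φ₂ : D →ₐ[ℂ] B}
    (hφ₁ : ∀ d, ‖φ₁ d‖ ≤ ‖d‖) (hφ₂ : ∀ d, ‖φ₂ d‖ ≤ ‖d‖) {x : D} (hx : φ₁ x = φ₂ x) :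
    φ₁ (star x) = φ₂ (star x) := by
  set p := φ₁ (ℜ x) - φ₂ (ℜ x)
  set q := φ₁ (ℑ x) - φ₂ (ℑ x)
  have hp : IsHermitianElement p :=
    (isHermitianElement_map_of_isSelfAdjoint hφ₁ (ℜ x).2).sub
      (isHermitianElement_map_of_isSelfAdjoint hφ₂ (ℜ x).2)
  have hq : IsHermitianElement q :=
    (isHermitianElement_map_of_isSelfAdjoint hφ₁ (ℑ x).2).sub
      (isHermitianElement_map_of_isSelfAdjoint hφ₂ (ℑ x).2)
  have hpq : p + Complex.I • q = 0 := by
    have := congrArg (fun y => φ₁ y - φ₂ y) (realPart_add_I_smul_imaginaryPart x)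
    simp only [map_add, map_smul, hx, sub_self] at this
    rw [← this]
    simp only [p, q, smul_sub]
    abel
  have hIp : Complex.I • p = q := by
    rw [eq_neg_of_add_eq_zero_left hpq, smul_neg, smul_smul, Complex.I_mul_I, neg_one_smul, neg_neg]
  have hp0 : p = 0 := hp.eq_zero_of_I_smul (hIp ▸ hq)
  have hq0 : q = 0 := by rw [← hIp, hp0, smul_zero]
  have hstar : star x = ℜ x - Complex.I • ℑ x := by
    conv_lhs => rw [← realPart_add_I_smul_imaginaryPart x]
    simp [star_smul, sub_eq_add_neg]
  rw [hstar, map_sub, map_sub, map_smul, map_smul, sub_eq_zero.1 hp0, sub_eq_zero.1 hq0]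

end CStarAlgebra

theorem AlgHom.eqOn_starAlgebraAdjoin {R A B : Type*} [CommSemiring R] [StarRing R]
    [Semiring A] [StarRing A] [Algebra R A] [StarModule R A] [Semiring B] [Algebra R B]
    (φ ψ : A →ₐ[R] B) (hstar : ∀ x, φ x = ψ x → φ (star x) = ψ (star x)) {s : Set A}
    (hs : Set.EqOn φ ψ s) : Set.EqOn φ ψ (StarAlgebra.adjoin R s) := by
  let E : StarSubalgebra R A :=
    { AlgHom.equalizer φ ψ with star_mem' := fun {x} hx => hstar x hx }
  exact StarAlgebra.adjoin_le (S := E) hs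

theorem WStarContinuous.eq_of_eqOn_of_dense {X Xp Y Yp : Type*}
    [SeminormedAddCommGroup X] [NormedSpace ℂ X] [NormedAddCommGroup Xp] [NormedSpace ℂ Xp]
    [SeminormedAddCommGroup Y] [NormedSpace ℂ Y] [NormedAddCommGroup Yp] [NormedSpace ℂ Yp]
    {ιX : X ≃ₗᵢ[ℂ] StrongDual ℂ Xp} {ιY : Y ≃ₗᵢ[ℂ] StrongDual ℂ Yp} {f g : X → Y}
    (hf : WStarContinuous ιX ιY f) (hg : WStarContinuous ιX ιY g) {S : Set X}
    (hfg : Set.EqOn f g S) (hS : Dense ((fun x => StrongDual.toWeakDual (ιX x)) '' S)) :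
    f = g := by
  have h := hf.ext_on hS hg (by rintro _ ⟨x, hx, rfl⟩; simp [hfg hx])
  funext x
  simpa using congrFun h (StrongDual.toWeakDual (ιX x))

/-- Two unital contractive weak*-continuous homomorphisms from a W*-algebra `D`
generated (as a W*-algebra) by a unital subalgebra `M`, into a dual Banach
algebra, which agree on `M`, are equal. -/
theorem stmt4
    -- D : a W*-algebra with predual Dp
    (D : Type*) [NormedRing D] [StarRing D] [CStarRing D] [CompleteSpace D]
    [NormedAlgebra ℂ D] [StarModule ℂ D]
    (Dp : Type*) [NormedAddCommGroup Dp] [NormedSpace ℂ Dp]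
    (ιD : D ≃ₗᵢ[ℂ] StrongDual ℂ Dp)
    -- M : a unital subalgebra generating D as a W*-algebra
    (M : Subalgebra ℂ D)
    (hgen : Dense ((fun d : D => StrongDual.toWeakDual (ιD d)) ''
      (StarAlgebra.adjoin ℂ (M : Set D) : Set D)))
    -- B : a unital Banach algebra with ‖1‖ = 1 which is a dual Banach space
    (B : Type*) [NormedRing B] [NormedAlgebra ℂ B] [CompleteSpace B] [NormOneClass B]
    (Bp : Type*) [NormedAddCommGroup Bp] [NormedSpace ℂ Bp]
    (ιB : B ≃ₗᵢ[ℂ] StrongDual ℂ Bp)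
    -- φ₁, φ₂ : unital contractive weak*-continuous homomorphisms
    (φ₁ φ₂ : D →ₐ[ℂ] B)
    (hcontr₁ : ∀ d : D, ‖φ₁ d‖ ≤ ‖d‖) (hcontr₂ : ∀ d : D, ‖φ₂ d‖ ≤ ‖d‖)
    (hwc₁ : WStarContinuous ιD ιB φ₁) (hwc₂ : WStarContinuous ιD ιB φ₂)
    (hagree : ∀ a ∈ M, φ₁ a = φ₂ a) :
    φ₁ = φ₂ := by
  have hadjoin : Set.EqOn φ₁ φ₂ (StarAlgebra.adjoin ℂ (M : Set D)) :=
    φ₁.eqOn_starAlgebraAdjoin φ₂ (fun _ => map_star_eq_of_map_eq hcontr₁ hcontr₂)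
      fun a ha => hagree a ha
  exact AlgHom.coe_fn_injective (hwc₁.eq_of_eqOn_of_dense hwc₂ hadjoin hgen)
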